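/- arXiv:2107.11679 — 4 statements merged into one kernel-verified Lean document; each statement's English description precedes it below -/
import Mathlib

section
/- (Quantum duality theorem, total correctness) Let 𝓔 be a quantum operation with dual 𝓔*, and let M, N be quantum predicates. Then the total correctness condition tr(Mρ) ≤ tr(N·𝓔(ρ)) for all partial density operators ρ holds if and only if M ⊑ 𝓔*(N). -/
open Matrix BigOperators ComplexOrder

/-!
Cyclicity of the trace gives `tr(N 𝓔(ρ)) = tr(𝓔*(N) ρ)`, so the correctness condition says
`0 ≤ tr((𝓔*(N) - M) ρ)` for every partial density operator `ρ`. A Hermitian matrix `B` has this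
property iff it is positive semidefinite: testing rank-one `ρ = x x*` gives `0 ≤ x* B x`, and
conversely `tr(C* C ρ) = tr(C ρ C*) ≥ 0`.
-/

namespace Matrix

variable {ι m n R 𝕜 : Type*} [Fintype ι] [Fintype m] [Fintype n]

theorem trace_mul_sum_mul_mul_conjTranspose [CommSemiring R] [StarRing R]
    (E : ι → Matrix m n R) (N : Matrix m m R) (ρ : Matrix n n R) :
    (N * ∑ k, E k * ρ * (E k)ᴴ).trace = ((∑ k, (E k)ᴴ * N * E k) * ρ).trace := by
  simp only [Finset.mul_sum, Finset.sum_mul, trace_sum]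
  refine Finset.sum_congr rfl fun k _ => ?_
  simp only [Matrix.mul_assoc]
  rw [trace_mul_comm (E k)ᴴ]
  simp only [Matrix.mul_assoc]

omit [Fintype n] in
theorem isHermitian_sum_conjTranspose_mul_mul [Semiring R] [StarRing R]
    (E : ι → Matrix m n R) {N : Matrix m m R} (hN : N.IsHermitian) :
    (∑ k, (E k)ᴴ * N * E k).IsHermitian := by
  simp only [IsHermitian, conjTranspose_sum]
  exact Finset.sum_congr rfl fun k _ => isHermitian_conjTranspose_mul_mul (E k) hN

variable [RCLike 𝕜]

open scoped MatrixOrder in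
theorem PosSemidef.trace_mul_nonneg {A ρ : Matrix n n 𝕜} (hA : A.PosSemidef)
    (hρ : ρ.PosSemidef) : 0 ≤ (A * ρ).trace := by
  classical
  obtain ⟨B, rfl⟩ := CStarAlgebra.nonneg_iff_eq_star_mul_self.mp hA.nonneg
  rw [mul_assoc, trace_mul_comm]
  exact (hρ.mul_mul_conjTranspose_same B).trace_nonneg

theorem trace_mul_vecMulVec_star (B : Matrix n n 𝕜) (x : n → 𝕜) :
    (B * vecMulVec x (star x)).trace = star x ⬝ᵥ B *ᵥ x := by
  rw [mul_vecMulVec, trace_vecMulVec, dotProduct_comm]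

theorem posSemidef_of_forall_re_trace_mul_nonneg {B : Matrix n n 𝕜} (hB : B.IsHermitian)
    (h : ∀ ρ : Matrix n n 𝕜, ρ.PosSemidef → 0 ≤ RCLike.re (B * ρ).trace) : B.PosSemidef := by
  refine .of_dotProduct_mulVec_nonneg hB fun x => RCLike.nonneg_iff.mpr ⟨?_, ?_⟩
  · simpa only [trace_mul_vecMulVec_star] using h _ (posSemidef_vecMulVec_self_star x)
  · exact hB.im_star_dotProduct_mulVec_self x

-- Rescale `ρ` by `(1 + tr ρ)⁻¹`.
theorem forall_re_trace_mul_nonneg_of_trace_le_one {B : Matrix n n 𝕜}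
    (h : ∀ ρ : Matrix n n 𝕜, ρ.PosSemidef → RCLike.re ρ.trace ≤ 1 →
      0 ≤ RCLike.re (B * ρ).trace)
    (ρ : Matrix n n 𝕜) (hρ : ρ.PosSemidef) : 0 ≤ RCLike.re (B * ρ).trace := by
  have htr : 0 ≤ RCLike.re ρ.trace := (RCLike.nonneg_iff.mp hρ.trace_nonneg).1
  set c : ℝ := (1 + RCLike.re ρ.trace)⁻¹
  have hc : 0 < c := inv_pos.mpr (by linarith)
  have hscaled := h (c • ρ) (hρ.smul hc.le) (by
    rw [trace_smul, RCLike.smul_re]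
    exact (inv_mul_le_one₀ (by linarith)).mpr (by linarith))
  rw [mul_smul_comm, trace_smul, RCLike.smul_re] at hscaled
  exact nonneg_of_mul_nonneg_right hscaled hc

theorem posSemidef_iff_forall_re_trace_mul_nonneg {B : Matrix n n 𝕜} (hB : B.IsHermitian) :
    B.PosSemidef ↔ ∀ ρ : Matrix n n 𝕜, ρ.PosSemidef → RCLike.re ρ.trace ≤ 1 →
      0 ≤ RCLike.re (B * ρ).trace :=
  ⟨fun hBpos _ hρ _ => (RCLike.nonneg_iff.mp (hBpos.trace_mul_nonneg hρ)).1,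
    fun h => posSemidef_of_forall_re_trace_mul_nonneg hB
      (forall_re_trace_mul_nonneg_of_trace_le_one h)⟩

end Matrix

theorem quantum_duality_total_general (n : ℕ) (ι : Type*) [Fintype ι]
    (E : ι → Matrix (Fin n) (Fin n) ℂ)
    (M N : Matrix (Fin n) (Fin n) ℂ)
    (hMh : M.IsHermitian)
    (hNh : N.IsHermitian) :
    (∀ ρ : Matrix (Fin n) (Fin n) ℂ, ρ.PosSemidef → (ρ.trace).re ≤ 1 →
        ((M * ρ).trace).re ≤ ((N * ∑ k, E k * ρ * (E k)ᴴ).trace).re)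
      ↔ ((∑ k, (E k)ᴴ * N * E k) - M).PosSemidef := by
  rw [posSemidef_iff_forall_re_trace_mul_nonneg
    ((isHermitian_sum_conjTranspose_mul_mul E hNh).sub hMh)]
  refine forall₃_congr fun _ _ _ => ?_
  rw [trace_mul_sum_mul_mul_conjTranspose, sub_mul, trace_sub, map_sub, sub_nonneg]
  simp only [RCLike.re_to_complex]

/-- Quantum duality theorem (total correctness): for a quantum operation
`𝓔(ρ) = ∑ₖ Eₖ ρ Eₖᴴ` with dual `𝓔*(N) = ∑ₖ Eₖᴴ N Eₖ` and quantum predicates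
`M`, `N`, we have `tr(Mρ) ≤ tr(N·𝓔(ρ))` for all partial density operators
`ρ` iff `M ⊑ 𝓔*(N)`. -/
theorem quantum_duality_total (n : ℕ) (ι : Type*) [Fintype ι]
    (E : ι → Matrix (Fin n) (Fin n) ℂ)
    (hE : ((1 : Matrix (Fin n) (Fin n) ℂ) - ∑ k, (E k)ᴴ * E k).PosSemidef)
    (M N : Matrix (Fin n) (Fin n) ℂ)
    (hMh : M.IsHermitian) (hM0 : M.PosSemidef)
    (hM1 : ((1 : Matrix (Fin n) (Fin n) ℂ) - M).PosSemidef)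
    (hNh : N.IsHermitian) (hN0 : N.PosSemidef)
    (hN1 : ((1 : Matrix (Fin n) (Fin n) ℂ) - N).PosSemidef) :
    (∀ ρ : Matrix (Fin n) (Fin n) ℂ, ρ.PosSemidef → (ρ.trace).re ≤ 1 →
        ((M * ρ).trace).re ≤ ((N * ∑ k, E k * ρ * (E k)ᴴ).trace).re)
      ↔ ((∑ k, (E k)ᴴ * N * E k) - M).PosSemidef :=
  quantum_duality_total_general n ι E M N hMh hNh
end

section
/- For the measurement M = {M₀ = √(1/4)·I, M₁ = √(1/2)·I, M₂ = √(1/4)·I} and M' = {M₀' = √(1/2)·I, M₁' = √(1/2)·I} on a qubit, the mutually recursive fixed-point semantics of Alice's procedure equals the superoperator (1/3)·H ∘ ρ ∘ H + (1/3)·(HX) ∘ ρ ∘ (XH). Concretely: if a₀ = 0 (as a superoperator), aₙ₊₁(ρ) = (1/4)·HρH + (1/2)·bₙ(ρ), and b₀ = 0, bₙ₊₁(ρ) = (1/2)·aₙ(ρ) + (1/2)·(HX)ρ(XH), then for every positive semidefinite ρ, aₙ(ρ) converges (monotonically in the Löwner order) to (1/3)·HρH + (1/3)·(HX)ρ(XH).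 -/
/-!
Write `P = HρH` and `Q = (HX)ρ(XH)`. Unfolding Bob once eliminates him:
`aₙ₊₂(ρ) = ¼(P + Q) + ¼aₙ(ρ)`, so `aₙ(ρ) = s⌈n/2⌉ • P + s⌊n/2⌋ • Q` with
`s m = ∑_{k=1}^{m} 4⁻ᵏ = (1 - 4⁻ᵐ)/3`. These coefficients are nondecreasing and tend to `1/3`,
and `P`, `Q` are positive semidefinite because `H` and `X` are Hermitian.
-/

open Matrix BigOperators ComplexOrder Filter

noncomputable def quarterSum (m : ℕ) : ℝ := (1 - (1 / 4 : ℝ) ^ m) / 3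

lemma quarterSum_zero : quarterSum 0 = 0 := by
  simp [quarterSum]

lemma quarterSum_succ (m : ℕ) : quarterSum (m + 1) = 1 / 4 + quarterSum m / 4 := by
  simp only [quarterSum, pow_succ]
  ring

lemma quarterSum_monotone : Monotone quarterSum := fun _ _ hmn ↦ by
  have := pow_le_pow_of_le_one (by norm_num : (0 : ℝ) ≤ 1 / 4) (by norm_num) hmn
  simp only [quarterSum]
  linarith

lemma tendsto_quarterSum : Tendsto quarterSum atTop (nhds (1 / 3)) := by
  have h := ((tendsto_pow_atTop_nhds_zero_of_lt_one (by norm_num : (0 : ℝ) ≤ 1 / 4)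
    (by norm_num)).const_sub 1).div_const 3
  rwa [sub_zero] at h

section ClosedForm

variable {M : Type*} [AddCommGroup M] [Module ℂ M]

noncomputable def aliceClosedForm (P Q : M) (n : ℕ) : M :=
  (quarterSum ((n + 1) / 2) : ℂ) • P + (quarterSum (n / 2) : ℂ) • Q

lemma aliceClosedForm_add_two (P Q : M) (n : ℕ) :
    aliceClosedForm P Q (n + 2) = (1 / 4 : ℂ) • (P + Q) + (1 / 4 : ℂ) • aliceClosedForm P Q n := by
  have h₁ : (n + 2 + 1) / 2 = (n + 1) / 2 + 1 := by omega
  have h₂ : (n + 2) / 2 = n / 2 + 1 := by omega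
  simp only [aliceClosedForm, h₁, h₂, quarterSum_succ]
  push_cast
  module

lemma eq_aliceClosedForm_of_recursion (P Q : M) (a b : ℕ → M) (ha0 : a 0 = 0) (hb0 : b 0 = 0)
    (haS : ∀ n, a (n + 1) = (1 / 4 : ℂ) • P + (1 / 2 : ℂ) • b n)
    (hbS : ∀ n, b (n + 1) = (1 / 2 : ℂ) • a n + (1 / 2 : ℂ) • Q) (n : ℕ) :
    a n = aliceClosedForm P Q n := by
  induction n using Nat.twoStepInduction with
  | zero => simp [ha0, aliceClosedForm, quarterSum_zero]
  | one => simp [haS, hb0, aliceClosedForm, quarterSum_succ, quarterSum_zero]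
  | more n ih _ =>
    rw [aliceClosedForm_add_two, ← ih, haS, hbS]
    module

lemma tendsto_aliceClosedForm [TopologicalSpace M] [ContinuousAdd M] [ContinuousSMul ℂ M]
    (P Q : M) :
    Tendsto (aliceClosedForm P Q) atTop (nhds ((1 / 3 : ℂ) • P + (1 / 3 : ℂ) • Q)) := by
  have hq : Tendsto (fun m ↦ (quarterSum m : ℂ)) atTop (nhds (1 / 3)) := by
    have h := (Complex.continuous_ofReal.tendsto _).comp tendsto_quarterSum
    push_cast at h
    exact h
  have hceil : Tendsto (fun n : ℕ ↦ (n + 1) / 2) atTop atTop :=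
    (Nat.tendsto_div_const_atTop two_ne_zero).comp (tendsto_add_atTop_nat 1)
  exact ((hq.comp hceil).smul_const P).add
    ((hq.comp (Nat.tendsto_div_const_atTop two_ne_zero)).smul_const Q)

end ClosedForm

lemma Matrix.PosSemidef.ofReal_smul_add_ofReal_smul {n : Type*} [Fintype n]
    {P Q : Matrix n n ℂ} (hP : P.PosSemidef) (hQ : Q.PosSemidef) {s t : ℝ}
    (hs : 0 ≤ s) (ht : 0 ≤ t) :
    ((s : ℂ) • P + (t : ℂ) • Q).PosSemidef :=
  (hP.smul (Complex.zero_le_real.mpr hs)).add (hQ.smul (Complex.zero_le_real.mpr ht))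

lemma aliceClosedForm_succ_sub_posSemidef {n : Type*} [Fintype n] {P Q : Matrix n n ℂ}
    (hP : P.PosSemidef) (hQ : Q.PosSemidef) (k : ℕ) :
    (aliceClosedForm P Q (k + 1) - aliceClosedForm P Q k).PosSemidef := by
  have hsub : aliceClosedForm P Q (k + 1) - aliceClosedForm P Q k =
      ((quarterSum ((k + 2) / 2) - quarterSum ((k + 1) / 2) : ℝ) : ℂ) • P
        + ((quarterSum ((k + 1) / 2) - quarterSum (k / 2) : ℝ) : ℂ) • Q := by
    simp only [aliceClosedForm]
    push_cast
    module
  rw [hsub]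
  exact hP.ofReal_smul_add_ofReal_smul hQ
    (sub_nonneg.mpr (quarterSum_monotone (by omega)))
    (sub_nonneg.mpr (quarterSum_monotone (by omega)))

/-- The mutually recursive fixed-point semantics of Alice's procedure in the
recursive quantum Markov chain: with `a₀ = 0`, `aₙ₊₁(ρ) = (1/4)HρH + (1/2)bₙ(ρ)`,
`b₀ = 0`, `bₙ₊₁(ρ) = (1/2)aₙ(ρ) + (1/2)(HX)ρ(XH)`, for every positive
semidefinite `ρ` the sequence `aₙ(ρ)` increases monotonically in the Löwner
order and converges to `(1/3)HρH + (1/3)(HX)ρ(XH)`. -/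
theorem rqmc_alice_fixed_point
    (H X : Matrix (Fin 2) (Fin 2) ℂ)
    (hH : H = ((Real.sqrt 2 : ℝ) : ℂ)⁻¹ • !![1, 1; 1, -1])
    (hX : X = !![0, 1; 1, 0])
    (a b : ℕ → Matrix (Fin 2) (Fin 2) ℂ → Matrix (Fin 2) (Fin 2) ℂ)
    (ha0 : a 0 = fun _ => 0) (hb0 : b 0 = fun _ => 0)
    (haS : ∀ n ρ, a (n + 1) ρ = (1/4 : ℂ) • (H * ρ * H) + (1/2 : ℂ) • b n ρ)
    (hbS : ∀ n ρ, b (n + 1) ρ = (1/2 : ℂ) • a n ρ + (1/2 : ℂ) • (H * X * ρ * X * H)) :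
    ∀ ρ : Matrix (Fin 2) (Fin 2) ℂ, ρ.PosSemidef →
      (∀ n, (a (n + 1) ρ - a n ρ).PosSemidef) ∧
      Tendsto (fun n => a n ρ) atTop
        (nhds ((1/3 : ℂ) • (H * ρ * H) + (1/3 : ℂ) • (H * X * ρ * X * H))) := by
  intro ρ hρ
  have hHh : Hᴴ = H := by
    rw [hH, conjTranspose_smul, star_inv₀, Complex.star_def, Complex.conj_ofReal]
    congr 1
    ext i j; fin_cases i <;> fin_cases j <;> simp
  have hXh : Xᴴ = X := by
    rw [hX]; ext i j; fin_cases i <;> fin_cases j <;> simp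
  have hP : (H * ρ * H).PosSemidef := by
    simpa only [hHh] using hρ.mul_mul_conjTranspose_same H
  have hQ : (H * X * ρ * X * H).PosSemidef := by
    simpa only [conjTranspose_mul, hHh, hXh, Matrix.mul_assoc]
      using hρ.mul_mul_conjTranspose_same (H * X)
  have ha : ∀ n, a n ρ = aliceClosedForm (H * ρ * H) (H * X * ρ * X * H) n :=
    eq_aliceClosedForm_of_recursion _ _ (a · ρ) (b · ρ) (by simp [ha0]) (by simp [hb0])
      (haS · ρ) (hbS · ρ)
  simp only [ha]
  exact ⟨aliceClosedForm_succ_sub_posSemidef hP hQ, tendsto_aliceClosedForm _ _⟩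
end

section
/- With H and X as above and aₙ defined as in the recursive quantum Markov chain, the limiting output state on input |0⟩⟨0| is (1/3)·I: lim aₙ(|0⟩⟨0|) = (1/3)|+⟩⟨+| + (1/3)|−⟩⟨−| = (1/3)·I₂, where |±⟩ = (|0⟩ ± |1⟩)/√2. -/
/-!
With `p = H|0⟩⟨0|H = |+⟩⟨+|` and `m = HX|0⟩⟨0|XH = |−⟩⟨−|`, the chain evaluated at `|0⟩⟨0|` is the
affine recursion `aₙ₊₁ = p/4 + bₙ/2`, `bₙ₊₁ = aₙ/2 + m/2`. Its deviation from the fixed point is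
halved and swapped at every step, so `aₙ → (p + m)/3 = I/3` whatever the initial values.
-/

open Matrix BigOperators ComplexOrder Filter

noncomputable section Qubit

def hadamardGate : Matrix (Fin 2) (Fin 2) ℂ := ((Real.sqrt 2 : ℝ) : ℂ)⁻¹ • !![1, 1; 1, -1]

def pauliX : Matrix (Fin 2) (Fin 2) ℂ := !![0, 1; 1, 0]

def ketPlus : Fin 2 → ℂ := fun _ => ((Real.sqrt 2 : ℝ) : ℂ)⁻¹

def ketMinus : Fin 2 → ℂ := ![((Real.sqrt 2 : ℝ) : ℂ)⁻¹, -((Real.sqrt 2 : ℝ) : ℂ)⁻¹]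

theorem hadamardGate_mul_ket0_proj_mul_hadamardGate :
    hadamardGate * !![1, 0; 0, 0] * hadamardGate = vecMulVec ketPlus (star ketPlus) := by
  ext i j
  fin_cases i <;> fin_cases j <;> simp [hadamardGate, ketPlus, Matrix.mul_apply, vecMulVec_apply]

theorem hadamardGate_mul_pauliX_mul_ket0_proj_mul_pauliX_mul_hadamardGate :
    hadamardGate * pauliX * !![1, 0; 0, 0] * pauliX * hadamardGate =
      vecMulVec ketMinus (star ketMinus) := by
  ext i j
  fin_cases i <;> fin_cases j <;>
    simp [hadamardGate, pauliX, ketMinus, Matrix.mul_apply, vecMulVec_apply]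

theorem ofReal_sqrt_two_inv_mul_self :
    ((Real.sqrt 2 : ℝ) : ℂ)⁻¹ * ((Real.sqrt 2 : ℝ) : ℂ)⁻¹ = 1 / 2 := by
  rw [← mul_inv, ← Complex.ofReal_mul, Real.mul_self_sqrt zero_le_two]
  norm_num

theorem ketPlus_proj_add_ketMinus_proj :
    vecMulVec ketPlus (star ketPlus) + vecMulVec ketMinus (star ketMinus) = 1 := by
  ext i j
  fin_cases i <;> fin_cases j <;>
    norm_num [ketPlus, ketMinus, vecMulVec_apply, -cons_vecMulVec, ofReal_sqrt_two_inv_mul_self]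

end Qubit

theorem Prod.norm_swap {E F : Type*} [Norm E] [Norm F] (x : E × F) : ‖x.swap‖ = ‖x‖ := by
  simp only [Prod.norm_def, Prod.fst_swap, Prod.snd_swap, max_comm]

theorem tendsto_zero_of_eq_smul_swap {𝕜 E : Type*} [NormedField 𝕜] [SeminormedAddCommGroup E]
    [NormedSpace 𝕜 E] {c : 𝕜} (hc : ‖c‖ < 1) (e : ℕ → E × E)
    (he : ∀ n, e (n + 1) = c • (e n).swap) : Tendsto e atTop (nhds 0) := by
  have hnorm : ∀ n, ‖e n‖ = ‖c‖ ^ n * ‖e 0‖ := by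
    intro n
    induction n with
    | zero => simp
    | succ n ih => rw [he, norm_smul, Prod.norm_swap, ih, pow_succ]; ring
  refine squeeze_zero_norm (fun n => (hnorm n).le) ?_
  simpa using (tendsto_pow_atTop_nhds_zero_of_lt_one (norm_nonneg c) hc).mul_const ‖e 0‖

/-- The fixed point of the recursion is `(p/3 + m/3, p/6 + 2m/3)`. -/
theorem tendsto_of_coupled_recursion {𝕜 E : Type*} [RCLike 𝕜] [SeminormedAddCommGroup E]
    [NormedSpace 𝕜 E] (p m : E) (a b : ℕ → E)
    (ha : ∀ n, a (n + 1) = (1/4 : 𝕜) • p + (1/2 : 𝕜) • b n)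
    (hb : ∀ n, b (n + 1) = (1/2 : 𝕜) • a n + (1/2 : 𝕜) • m) :
    Tendsto a atTop (nhds ((1/3 : 𝕜) • p + (1/3 : 𝕜) • m)) := by
  set A := (1/3 : 𝕜) • p + (1/3 : 𝕜) • m
  set B := (1/6 : 𝕜) • p + (2/3 : 𝕜) • m
  have hdev : Tendsto (fun n => (a n - A, b n - B)) atTop (nhds 0) := by
    refine tendsto_zero_of_eq_smul_swap (c := (1/2 : 𝕜)) (by norm_num) _ fun n => ?_
    simp only [Prod.swap_prod_mk, Prod.smul_mk, ha, hb, A, B]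
    congr 1 <;> module
  simpa using (continuous_fst.tendsto _ |>.comp hdev).add_const A

theorem rqmc_output_on_ket0_general
    (H X : Matrix (Fin 2) (Fin 2) ℂ)
    (hH : H = ((Real.sqrt 2 : ℝ) : ℂ)⁻¹ • !![1, 1; 1, -1])
    (hX : X = !![0, 1; 1, 0])
    (a b : ℕ → Matrix (Fin 2) (Fin 2) ℂ → Matrix (Fin 2) (Fin 2) ℂ)
    (haS : ∀ n ρ, a (n + 1) ρ = (1/4 : ℂ) • (H * ρ * H) + (1/2 : ℂ) • b n ρ)
    (hbS : ∀ n ρ, b (n + 1) ρ = (1/2 : ℂ) • a n ρ + (1/2 : ℂ) • (H * X * ρ * X * H))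
    (e00 : Matrix (Fin 2) (Fin 2) ℂ) (he00 : e00 = !![1, 0; 0, 0])
    (plus minus : Fin 2 → ℂ)
    (hplus : plus = fun _ => ((Real.sqrt 2 : ℝ) : ℂ)⁻¹)
    (hminus : minus = ![((Real.sqrt 2 : ℝ) : ℂ)⁻¹, -((Real.sqrt 2 : ℝ) : ℂ)⁻¹]) :
    H * e00 * H = vecMulVec plus (star plus) ∧
    H * X * e00 * X * H = vecMulVec minus (star minus) ∧
    vecMulVec plus (star plus) + vecMulVec minus (star minus) = 1 ∧
    Tendsto (fun n => a n e00) atTop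
      (nhds ((1/3 : ℂ) • vecMulVec plus (star plus)
             + (1/3 : ℂ) • vecMulVec minus (star minus))) := by
  obtain rfl : H = hadamardGate := hH
  obtain rfl : X = pauliX := hX
  obtain rfl : plus = ketPlus := hplus
  obtain rfl : minus = ketMinus := hminus
  subst he00
  have hP := hadamardGate_mul_ket0_proj_mul_hadamardGate
  have hM := hadamardGate_mul_pauliX_mul_ket0_proj_mul_pauliX_mul_hadamardGate
  refine ⟨hP, hM, ketPlus_proj_add_ketMinus_proj, ?_⟩
  rw [← hP, ← hM]
  -- the entrywise sup norm induces the product topology of the statement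
  let := Matrix.seminormedAddCommGroup (n := Fin 2) (m := Fin 2) (α := ℂ)
  let := Matrix.normedSpace (n := Fin 2) (m := Fin 2) (R := ℂ) (α := ℂ)
  exact tendsto_of_coupled_recursion (𝕜 := ℂ) _ _ (a · _) (b · _) (haS · _) (hbS · _)

/-- In the recursive quantum Markov chain, on input `|0⟩⟨0|` the limiting
output state is `(1/3)·I`: `lim aₙ(|0⟩⟨0|) = (1/3)|+⟩⟨+| + (1/3)|−⟩⟨−| = (1/3)I₂`,
including the identities `H|0⟩⟨0|H = |+⟩⟨+|`, `HX|0⟩⟨0|XH = |−⟩⟨−|` and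
`|+⟩⟨+| + |−⟩⟨−| = I`. -/
theorem rqmc_output_on_ket0
    (H X : Matrix (Fin 2) (Fin 2) ℂ)
    (hH : H = ((Real.sqrt 2 : ℝ) : ℂ)⁻¹ • !![1, 1; 1, -1])
    (hX : X = !![0, 1; 1, 0])
    (a b : ℕ → Matrix (Fin 2) (Fin 2) ℂ → Matrix (Fin 2) (Fin 2) ℂ)
    (ha0 : a 0 = fun _ => 0) (hb0 : b 0 = fun _ => 0)
    (haS : ∀ n ρ, a (n + 1) ρ = (1/4 : ℂ) • (H * ρ * H) + (1/2 : ℂ) • b n ρ)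
    (hbS : ∀ n ρ, b (n + 1) ρ = (1/2 : ℂ) • a n ρ + (1/2 : ℂ) • (H * X * ρ * X * H))
    (e00 : Matrix (Fin 2) (Fin 2) ℂ) (he00 : e00 = !![1, 0; 0, 0])
    (plus minus : Fin 2 → ℂ)
    (hplus : plus = fun _ => ((Real.sqrt 2 : ℝ) : ℂ)⁻¹)
    (hminus : minus = ![((Real.sqrt 2 : ℝ) : ℂ)⁻¹, -((Real.sqrt 2 : ℝ) : ℂ)⁻¹]) :
    H * e00 * H = vecMulVec plus (star plus) ∧
    H * X * e00 * X * H = vecMulVec minus (star minus) ∧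
    vecMulVec plus (star plus) + vecMulVec minus (star minus) = 1 ∧
    Tendsto (fun n => a n e00) atTop
      (nhds ((1/3 : ℂ) • vecMulVec plus (star plus)
             + (1/3 : ℂ) • vecMulVec minus (star minus))) :=
  rqmc_output_on_ket0_general H X hH hX a b haS hbS e00 he00 plus minus hplus hminus
end

section
/- Soundness of the case rule semantically: let {Mₘ} satisfy ∑ₘ Mₘ†Mₘ = I, let 𝓔ₘ be quantum operations, and let Pₘ, Q be quantum predicates such that tr(Pₘ σ) ≤ tr(Q·𝓔ₘ(σ)) for all positive semidefinite σ and each m. Then for the combined operation 𝓔(ρ) = ∑ₘ 𝓔ₘ(Mₘ ρ Mₘ†) and the predicate P = ∑ₘ Mₘ† Pₘ Mₘ, we have tr(Pρ) ≤ tr(Q·𝓔(ρ)) for all positive semidefinite ρ. -/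
open Matrix BigOperators ComplexOrder

/-- Semantic soundness of the case rule: if each branch `𝓔ₘ` (in Kraus form)
is totally correct w.r.t. precondition `Pₘ` and postcondition `Q`, then the
combined operation `𝓔(ρ) = ∑ₘ 𝓔ₘ(Mₘ ρ Mₘᴴ)` is totally correct w.r.t.
precondition `∑ₘ Mₘᴴ Pₘ Mₘ` and postcondition `Q`. -/
theorem case_rule_sound (n : ℕ) (ι κ : Type*) [Fintype ι] [Fintype κ]
    (M : ι → Matrix (Fin n) (Fin n) ℂ)
    (hM : ∑ m, (M m)ᴴ * M m = 1)
    (E : ι → κ → Matrix (Fin n) (Fin n) ℂ)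
    (P : ι → Matrix (Fin n) (Fin n) ℂ) (Q : Matrix (Fin n) (Fin n) ℂ)
    (hPh : ∀ m, (P m).IsHermitian) (hP0 : ∀ m, (P m).PosSemidef)
    (hP1 : ∀ m, ((1 : Matrix (Fin n) (Fin n) ℂ) - P m).PosSemidef)
    (hQh : Q.IsHermitian) (hQ0 : Q.PosSemidef)
    (hQ1 : ((1 : Matrix (Fin n) (Fin n) ℂ) - Q).PosSemidef)
    (hbranch : ∀ m (σ : Matrix (Fin n) (Fin n) ℂ), σ.PosSemidef →
      ((P m * σ).trace).re ≤ ((Q * ∑ k, E m k * σ * (E m k)ᴴ).trace).re) :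
    ∀ ρ : Matrix (Fin n) (Fin n) ℂ, ρ.PosSemidef →
      (((∑ m, (M m)ᴴ * P m * M m) * ρ).trace).re
        ≤ ((Q * ∑ m, ∑ k, E m k * (M m * ρ * (M m)ᴴ) * (E m k)ᴴ).trace).re := by
  intro ρ hρ
  have hL : (((∑ m, (M m)ᴴ * P m * M m) * ρ).trace).re
      = ∑ m, ((P m * (M m * ρ * (M m)ᴴ)).trace).re := by
    rw [Finset.sum_mul, Matrix.trace_sum, Complex.re_sum]
    congr 1; ext m
    congr 1
    rw [mul_assoc, mul_assoc, Matrix.trace_mul_comm, mul_assoc]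
  have hR : ((Q * ∑ m, ∑ k, E m k * (M m * ρ * (M m)ᴴ) * (E m k)ᴴ).trace).re
      = ∑ m, ((Q * ∑ k, E m k * (M m * ρ * (M m)ᴴ) * (E m k)ᴴ).trace).re := by
    rw [Finset.mul_sum, Matrix.trace_sum, Complex.re_sum]
  rw [hL, hR]
  apply Finset.sum_le_sum
  intro m _
  exact hbranch m _ (hρ.mul_mul_conjTranspose_same (M m))
end
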